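/- Let π̄ ∈ Π(p̄,q̄;M̄) satisfy π̄_{m+1,n+1} = 0, and let π̈ ∈ ℝ_{≥0}^{m×n} be the upper-left m×n block of π̄. Then π̈ belongs to the partial masked feasible set Π^s(p,q;M); that is, (M⊙π̈)1_n ≤ p entrywise, (M⊙π̈)^T 1_m ≤ q entrywise, 1_m^T (M⊙π̈) 1_n = s, Σ_j (M⊙π̈)_{i,j} = p_i for every i ∈ I, and Σ_i (M⊙π̈)_{i,j} = q_j for every j ∈ J. -/

import Mathlib

/-!
Each of the first `m` rows of `π̄` splits into its part in the upper-left block plus the mass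
`a i * π̄ i (n+1)` it sends to the dummy column; this is nonnegative, and zero on keypoint rows
where `a i = 0`. Columns behave symmetrically. Summing the row identities and using the dummy
column's constraint `∑ i, a i * π̄ i (n+1) + π̄ (m+1) (n+1) = ‖p‖₁ - s` with a vanishing corner
gives total block mass `s`.
-/

open Finset

noncomputable section

variable {m n : ℕ}

/-- Mask matrix determined by the keypoint pair set `K`:
`M i j = 1` if `(i,j) ∈ K`; `M i j = 0` if `i ∈ I` or `j ∈ J` but `(i,j) ∉ K`;
`M i j = 1` otherwise. -/
def mask (K : Finset (Fin m × Fin n)) : Matrix (Fin m) (Fin n) ℝ :=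
  fun i j =>
    if (i, j) ∈ K then 1
    else if (∃ j', (i, j') ∈ K) ∨ (∃ i', (i', j) ∈ K) then 0
    else 1

/-- The masked feasible set `Π(p, q; M)`. -/
def PiM (M : Matrix (Fin m) (Fin n) ℝ) (p : Fin m → ℝ) (q : Fin n → ℝ) :
    Set (Matrix (Fin m) (Fin n) ℝ) :=
  {π | (∀ i j, 0 ≤ π i j) ∧ (∀ i, ∑ j, M i j * π i j = p i) ∧
    (∀ j, ∑ i, M i j * π i j = q j)}

/-- Extend an `m × n` matrix by one extra column, one extra row and a corner entry. -/
def extend (B : Matrix (Fin m) (Fin n) ℝ) (col : Fin m → ℝ) (row : Fin n → ℝ)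
    (corner : ℝ) : Matrix (Fin (m + 1)) (Fin (n + 1)) ℝ :=
  fun i j =>
    if hi : (i : ℕ) < m then
      if hj : (j : ℕ) < n then B ⟨i, hi⟩ ⟨j, hj⟩ else col ⟨i, hi⟩
    else if hj : (j : ℕ) < n then row ⟨j, hj⟩ else corner

/-- Extend a vector by one extra entry. -/
def extVec (v : Fin m → ℝ) (last : ℝ) : Fin (m + 1) → ℝ :=
  fun i => if hi : (i : ℕ) < m then v ⟨i, hi⟩ else last

/-- `a i = 0` if `i ∈ I` and `1` otherwise. -/
def avec (K : Finset (Fin m × Fin n)) : Fin m → ℝ :=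
  fun i => if ∃ j, (i, j) ∈ K then 0 else 1

/-- `b j = 0` if `j ∈ J` and `1` otherwise. -/
def bvec (K : Finset (Fin m × Fin n)) : Fin n → ℝ :=
  fun j => if ∃ i, (i, j) ∈ K then 0 else 1

/-- The extended mask `M̄`. -/
def Mbar (K : Finset (Fin m × Fin n)) : Matrix (Fin (m + 1)) (Fin (n + 1)) ℝ :=
  extend (mask K) (avec K) (bvec K) 1

/-- The extended guiding matrix `Ḡ`. -/
def Gbar (G : Matrix (Fin m) (Fin n) ℝ) (ξ A : ℝ) :
    Matrix (Fin (m + 1)) (Fin (n + 1)) ℝ :=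
  extend G (fun _ => ξ) (fun _ => ξ) (2 * ξ + A)

/-- The extended source weights `p̄ = (pᵀ, ‖q‖₁ − s)ᵀ`. -/
def pbar (p : Fin m → ℝ) (q : Fin n → ℝ) (s : ℝ) : Fin (m + 1) → ℝ :=
  extVec p (∑ j, q j - s)

/-- The extended target weights `q̄ = (qᵀ, ‖p‖₁ − s)ᵀ`. -/
def qbar (p : Fin m → ℝ) (q : Fin n → ℝ) (s : ℝ) : Fin (n + 1) → ℝ :=
  extVec q (∑ i, p i - s)

/-- The partial masked feasible set `Π^s(p, q; M)`. -/
def PiPartial (K : Finset (Fin m × Fin n)) (p : Fin m → ℝ) (q : Fin n → ℝ) (s : ℝ) :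
    Set (Matrix (Fin m) (Fin n) ℝ) :=
  {π | (∀ i j, 0 ≤ π i j) ∧ (∀ i, ∑ j, mask K i j * π i j ≤ p i) ∧
    (∀ j, ∑ i, mask K i j * π i j ≤ q j) ∧
    (∑ i, ∑ j, mask K i j * π i j = s) ∧
    (∀ i, (∃ j, (i, j) ∈ K) → ∑ j, mask K i j * π i j = p i) ∧
    (∀ j, (∃ i, (i, j) ∈ K) → ∑ i, mask K i j * π i j = q j)}

@[simp]
lemma extend_castSucc_castSucc (B : Matrix (Fin m) (Fin n) ℝ) (col : Fin m → ℝ) (row : Fin n → ℝ)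
    (corner : ℝ) (i : Fin m) (j : Fin n) :
    extend B col row corner i.castSucc j.castSucc = B i j := by
  simp [extend]

@[simp]
lemma extend_castSucc_last (B : Matrix (Fin m) (Fin n) ℝ) (col : Fin m → ℝ) (row : Fin n → ℝ)
    (corner : ℝ) (i : Fin m) : extend B col row corner i.castSucc (Fin.last n) = col i := by
  simp [extend]

@[simp]
lemma extend_last_castSucc (B : Matrix (Fin m) (Fin n) ℝ) (col : Fin m → ℝ) (row : Fin n → ℝ)
    (corner : ℝ) (j : Fin n) : extend B col row corner (Fin.last m) j.castSucc = row j := by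
  simp [extend]

@[simp]
lemma extend_last_last (B : Matrix (Fin m) (Fin n) ℝ) (col : Fin m → ℝ) (row : Fin n → ℝ)
    (corner : ℝ) : extend B col row corner (Fin.last m) (Fin.last n) = corner := by
  simp [extend]

@[simp]
lemma extVec_castSucc (v : Fin m → ℝ) (last : ℝ) (i : Fin m) : extVec v last i.castSucc = v i := by
  simp [extVec]

@[simp]
lemma extVec_last (v : Fin m → ℝ) (last : ℝ) : extVec v last (Fin.last m) = last := by
  simp [extVec]

lemma avec_nonneg (K : Finset (Fin m × Fin n)) (i : Fin m) : 0 ≤ avec K i := by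
  unfold avec; split <;> norm_num

lemma bvec_nonneg (K : Finset (Fin m × Fin n)) (j : Fin n) : 0 ≤ bvec K j := by
  unfold bvec; split <;> norm_num

lemma avec_eq_zero {K : Finset (Fin m × Fin n)} {i : Fin m} (hi : ∃ j, (i, j) ∈ K) :
    avec K i = 0 := by
  simp [avec, hi]

lemma bvec_eq_zero {K : Finset (Fin m × Fin n)} {j : Fin n} (hj : ∃ i, (i, j) ∈ K) :
    bvec K j = 0 := by
  simp [bvec, hj]

namespace PiM

variable {M : Matrix (Fin m) (Fin n) ℝ} {a : Fin m → ℝ} {b : Fin n → ℝ} {c x y : ℝ}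
  {p : Fin m → ℝ} {q : Fin n → ℝ} {π : Matrix (Fin (m + 1)) (Fin (n + 1)) ℝ}

lemma extend_row_sum (h : π ∈ PiM (extend M a b c) (extVec p x) (extVec q y)) (i : Fin m) :
    ∑ j, M i j * π i.castSucc j.castSucc + a i * π i.castSucc (Fin.last n) = p i := by
  simpa [Fin.sum_univ_castSucc] using h.2.1 i.castSucc

lemma extend_col_sum (h : π ∈ PiM (extend M a b c) (extVec p x) (extVec q y)) (j : Fin n) :
    ∑ i, M i j * π i.castSucc j.castSucc + b j * π (Fin.last m) j.castSucc = q j := by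
  simpa [Fin.sum_univ_castSucc] using h.2.2 j.castSucc

lemma extend_last_col_sum (h : π ∈ PiM (extend M a b c) (extVec p x) (extVec q y)) :
    ∑ i, a i * π i.castSucc (Fin.last n) + c * π (Fin.last m) (Fin.last n) = y := by
  simpa [Fin.sum_univ_castSucc] using h.2.2 (Fin.last n)

lemma extend_block_sum (h : π ∈ PiM (extend M a b c) (extVec p x) (extVec q y)) :
    ∑ i, ∑ j, M i j * π i.castSucc j.castSucc
      = ∑ i, p i - y + c * π (Fin.last m) (Fin.last n) := by
  have hrow i : ∑ j, M i j * π i.castSucc j.castSucc = p i - a i * π i.castSucc (Fin.last n) :=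
    eq_sub_of_add_eq (extend_row_sum h i)
  rw [Finset.sum_congr rfl fun i _ ↦ hrow i, Finset.sum_sub_distrib, ← extend_last_col_sum h]
  ring

lemma extend_row_sum_le (h : π ∈ PiM (extend M a b c) (extVec p x) (extVec q y)) {i : Fin m}
    (ha : 0 ≤ a i) : ∑ j, M i j * π i.castSucc j.castSucc ≤ p i :=
  le_of_add_le_of_nonneg_left (extend_row_sum h i).le (mul_nonneg ha (h.1 _ _))

lemma extend_col_sum_le (h : π ∈ PiM (extend M a b c) (extVec p x) (extVec q y)) {j : Fin n}
    (hb : 0 ≤ b j) : ∑ i, M i j * π i.castSucc j.castSucc ≤ q j :=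
  le_of_add_le_of_nonneg_left (extend_col_sum h j).le (mul_nonneg hb (h.1 _ _))

lemma extend_row_sum_eq (h : π ∈ PiM (extend M a b c) (extVec p x) (extVec q y)) {i : Fin m}
    (ha : a i = 0) : ∑ j, M i j * π i.castSucc j.castSucc = p i := by
  simpa [ha] using extend_row_sum h i

lemma extend_col_sum_eq (h : π ∈ PiM (extend M a b c) (extVec p x) (extVec q y)) {j : Fin n}
    (hb : b j = 0) : ∑ i, M i j * π i.castSucc j.castSucc = q j := by
  simpa [hb] using extend_col_sum h j

end PiM

theorem upper_left_block_partial_feasible_general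
    (p : Fin m → ℝ) (q : Fin n → ℝ) (K : Finset (Fin m × Fin n)) (s : ℝ)
    (πb : Matrix (Fin (m + 1)) (Fin (n + 1)) ℝ)
    (hπb : πb ∈ PiM (Mbar K) (pbar p q s) (qbar p q s))
    (hzero : πb (Fin.last m) (Fin.last n) = 0) :
    (fun (i : Fin m) (j : Fin n) => πb i.castSucc j.castSucc) ∈ PiPartial K p q s := by
  refine ⟨fun i j ↦ hπb.1 _ _, fun i ↦ PiM.extend_row_sum_le hπb (avec_nonneg K i),
    fun j ↦ PiM.extend_col_sum_le hπb (bvec_nonneg K j), ?_,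
    fun i hi ↦ PiM.extend_row_sum_eq hπb (avec_eq_zero hi),
    fun j hj ↦ PiM.extend_col_sum_eq hπb (bvec_eq_zero hj)⟩
  rw [PiM.extend_block_sum hπb, hzero]
  ring

/-- if `π̄ ∈ Π(p̄,q̄;M̄)` has zero dummy-to-dummy mass, then its
upper-left `m × n` block belongs to the partial masked feasible set `Π^s(p,q;M)`. -/
theorem upper_left_block_partial_feasible
    (p : Fin m → ℝ) (q : Fin n → ℝ) (K : Finset (Fin m × Fin n)) (s : ℝ)
    (hp : ∀ i, 0 ≤ p i) (hq : ∀ j, 0 ≤ q j)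
    (hK1 : ∀ a ∈ K, ∀ b ∈ K, a.1 = b.1 → a = b)
    (hK2 : ∀ a ∈ K, ∀ b ∈ K, a.2 = b.2 → a = b)
    (hs0 : 0 ≤ s) (hs : s ≤ min (∑ i, p i) (∑ j, q j))
    (πb : Matrix (Fin (m + 1)) (Fin (n + 1)) ℝ)
    (hπb : πb ∈ PiM (Mbar K) (pbar p q s) (qbar p q s))
    (hzero : πb (Fin.last m) (Fin.last n) = 0) :
    (fun (i : Fin m) (j : Fin n) => πb i.castSucc j.castSucc) ∈ PiPartial K p q s :=
  upper_left_block_partial_feasible_general p q K s πb hπb hzero
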